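/- arXiv:2512.06010 — 7 statements merged into one kernel-verified Lean document; each statement's English description precedes it below -/
import Mathlib

section
/- Let E be a normed space, K a finite nonempty type, p ≥ 1 a real number, and let f : E → (K → ℝ) be L-Lipschitz (L > 0) where the output space K → ℝ carries the ℓp norm. Let X ∈ E and Y ∈ K be such that f(X)(Y) ≥ f(X)(k) + M for every k ≠ Y, with margin M > 0. Then for every X̃ ∈ E with ‖X̃ − X‖ < 2^{(1−p)/p}·M / L, one has f(X̃)(Y) > f(X̃)(k) for every k ≠ Y; consequently the robustness radius of the prediction at (X, Y), defined as the infimum of ‖X̃ − X‖ over all X̃ for which Y is not the unique argmax of f(X̃), is at least 2^{(1−p)/p}·M / L. -/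
lemma two_sum_le_aux {p : ℝ} (hp : 1 ≤ p) {a b : ℝ} (ha : 0 ≤ a) (hb : 0 ≤ b) :
    a + b ≤ 2 ^ ((p - 1) / p) * (a ^ p + b ^ p) ^ (1 / p) := by
  have hp0 : (0 : ℝ) < p := lt_of_lt_of_le one_pos hp
  have h1 : (a + b) ^ p ≤ 2 ^ (p - 1) * (a ^ p + b ^ p) := by
    have h := NNReal.rpow_add_le_mul_rpow_add_rpow ⟨a, ha⟩ ⟨b, hb⟩ hp
    have := NNReal.coe_le_coe.2 h
    push_cast at this
    exact_mod_cast this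
  have h2 : ((a + b) ^ p) ^ (1 / p) ≤ (2 ^ (p - 1) * (a ^ p + b ^ p)) ^ (1 / p) :=
    Real.rpow_le_rpow (Real.rpow_nonneg (by positivity) _) h1 (by positivity)
  have h3 : ((a + b) ^ p) ^ (1 / p) = a + b := by
    rw [← Real.rpow_mul (by positivity), mul_one_div, div_self hp0.ne', Real.rpow_one]
  have h4 : (2 ^ (p - 1) * (a ^ p + b ^ p)) ^ (1 / p)
      = 2 ^ ((p - 1) / p) * (a ^ p + b ^ p) ^ (1 / p) := by
    rw [Real.mul_rpow (by positivity) (by positivity), ← Real.rpow_mul (by norm_num),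
      mul_one_div]
  rw [h3, h4] at h2
  exact h2

/-- Lipschitz classification robustness certificate. If `f : E → (K → ℝ)` is
`L`-Lipschitz (`L > 0`) w.r.t. the ℓp norm on outputs (`p ≥ 1`) and the logits `f X` classify
`Y` with margin `M > 0`, then every `X̃` with `‖X̃ - X‖ < 2^((1-p)/p) * M / L` still classifies
`Y` strictly; consequently `2^((1-p)/p) * M / L` is a lower bound on the robustness radius,
i.e. on the distances `‖X̃ - X‖` to points where `Y` is not the unique argmax. -/
theorem stmt_3 {E K : Type*} [NormedAddCommGroup E] [Fintype K] [Nonempty K]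
    (p : ℝ) (hp : 1 ≤ p) (L : ℝ) (hL : 0 < L)
    (f : E → K → ℝ)
    (hf : ∀ X₁ X₂ : E, (∑ k, |f X₁ k - f X₂ k| ^ p) ^ (1 / p) ≤ L * ‖X₁ - X₂‖)
    (X : E) (Y : K) (M : ℝ) (hM : 0 < M)
    (hmargin : ∀ k, k ≠ Y → f X k + M ≤ f X Y) :
    (∀ X' : E, ‖X' - X‖ < 2 ^ ((1 - p) / p) * M / L → ∀ k, k ≠ Y → f X' k < f X' Y) ∧
    2 ^ ((1 - p) / p) * M / L ∈
      lowerBounds {r : ℝ | ∃ X' : E, r = ‖X' - X‖ ∧ ∃ k, k ≠ Y ∧ f X' Y ≤ f X' k} := by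
  classical
  have hp0 : (0 : ℝ) < p := lt_of_lt_of_le one_pos hp
  have main : ∀ X' : E, ‖X' - X‖ < 2 ^ ((1 - p) / p) * M / L →
      ∀ k, k ≠ Y → f X' k < f X' Y := by
    intro X' hX' k hk
    set a : ℝ := |f X' Y - f X Y| with ha
    set b : ℝ := |f X' k - f X k| with hb
    have hsum : a ^ p + b ^ p ≤ ∑ j, |f X' j - f X j| ^ p := by
      have hsub : ({Y, k} : Finset K) ⊆ Finset.univ := Finset.subset_univ _
      have : ∑ j ∈ ({Y, k} : Finset K), |f X' j - f X j| ^ p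
          ≤ ∑ j, |f X' j - f X j| ^ p :=
        Finset.sum_le_sum_of_subset_of_nonneg hsub
          (fun j _ _ => Real.rpow_nonneg (abs_nonneg _) p)
      rwa [Finset.sum_pair (Ne.symm hk)] at this
    have hab : a + b ≤ 2 ^ ((p - 1) / p) * (L * ‖X' - X‖) := by
      have h1 := two_sum_le_aux hp (abs_nonneg (f X' Y - f X Y)) (abs_nonneg (f X' k - f X k))
      have h2 : (a ^ p + b ^ p) ^ (1 / p) ≤ (∑ j, |f X' j - f X j| ^ p) ^ (1 / p) :=
        Real.rpow_le_rpow (by positivity) hsum (by positivity)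
      have h3 := hf X' X
      calc a + b ≤ 2 ^ ((p - 1) / p) * (a ^ p + b ^ p) ^ (1 / p) := h1
        _ ≤ 2 ^ ((p - 1) / p) * (L * ‖X' - X‖) := by
            apply mul_le_mul_of_nonneg_left (le_trans h2 h3) (by positivity)
    have hlt : 2 ^ ((p - 1) / p) * (L * ‖X' - X‖) < M := by
      have h5 : L * ‖X' - X‖ < L * (2 ^ ((1 - p) / p) * M / L) :=
        mul_lt_mul_of_pos_left hX' hL
      have h6 : L * (2 ^ ((1 - p) / p) * M / L) = 2 ^ ((1 - p) / p) * M := by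
        field_simp
      have h7 : (2 : ℝ) ^ ((p - 1) / p) * (2 ^ ((1 - p) / p) * M) = M := by
        rw [← mul_assoc, ← Real.rpow_add two_pos]
        have : (p - 1) / p + (1 - p) / p = 0 := by ring
        rw [this, Real.rpow_zero, one_mul]
      calc 2 ^ ((p - 1) / p) * (L * ‖X' - X‖)
          < 2 ^ ((p - 1) / p) * (2 ^ ((1 - p) / p) * M) := by
            apply mul_lt_mul_of_pos_left _ (by positivity)
            rw [← h6]; exact h5
        _ = M := h7
    have habM : a + b < M := lt_of_le_of_lt hab hlt
    have h8 : f X k + M ≤ f X Y := hmargin k hk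
    have h9 : f X Y - a ≤ f X' Y := by
      have := abs_sub_abs_le_abs_sub (f X' Y) (f X Y)
      have h := neg_abs_le (f X' Y - f X Y)
      linarith [neg_abs_le (f X' Y - f X Y), le_abs_self (f X' Y - f X Y)]
    have h10 : f X' k ≤ f X k + b := by
      linarith [le_abs_self (f X' k - f X k)]
    linarith
  refine ⟨main, ?_⟩
  rintro r ⟨X', rfl, k, hk, hle⟩
  by_contra hcon
  push_neg at hcon
  exact absurd (main X' hcon k hk) (not_lt.2 hle)
end

section
/- Let E be a normed space, Ω and K finite nonempty types, p ≥ 1 a real number, and let f : E → (Ω × K → ℝ) be L-Lipschitz (L > 0) where the output space carries the ℓp norm over all Ω × K coordinates. Fix X ∈ E, labels Y : Ω → K, and for each ω ∈ Ω let M_ω = f(X)(ω, Y(ω)) − max_{k ≠ Y(ω)} f(X)(ω, k). Let ε ≥ 0 and let X̃ ∈ E satisfy ‖X̃ − X‖ ≤ ε. Let S be the set of pixels ω ∈ Ω such that M_ω > 0 (pixel ω is correctly classified at X) but there exists k ≠ Y(ω) with f(X̃)(ω, k) ≥ f(X̃)(ω, Y(ω)) (pixel ω is no longer strictly correctly classified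 at X̃). Then ∑_{ω ∈ S} 2^{1−p}·M_ω^p ≤ (L·ε)^p; equivalently, ∑_{ω ∈ S} R^ω(X,Y)^p ≤ ε^p where R^ω(X,Y) = 2^{(1−p)/p}·M_ω / L. -/
open scoped Classical

lemma real_mean2 {x y p : ℝ} (hx : 0 ≤ x) (hy : 0 ≤ y) (hp : 1 ≤ p) :
    (x + y) ^ p ≤ 2 ^ (p - 1) * (x ^ p + y ^ p) := by
  have h := NNReal.rpow_add_le_mul_rpow_add_rpow ⟨x, hx⟩ ⟨y, hy⟩ hp
  have := NNReal.coe_le_coe.mpr h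
  push_cast [NNReal.coe_rpow] at this
  convert this using 2
  all_goals rfl

/-- Disjoint-support additivity of pixel-flipping costs. Let
`f : E → (Ω × K → ℝ)` be `L`-Lipschitz (`L > 0`) w.r.t. the ℓp norm over all `Ω × K`
coordinates (`p ≥ 1`), `X` an input, `Y` ground-truth labels and `M ω` the margin of pixel
`ω`. If `‖X̃ - X‖ ≤ ε` and `S` is the set of pixels correctly classified at `X` (margin `> 0`)
but no longer strictly correctly classified at `X̃`, then `∑_{ω ∈ S} 2^(1-p) * (M ω)^p ≤ (L*ε)^p`;
equivalently `∑_{ω ∈ S} (R^ω)^p ≤ ε^p` with `R^ω = 2^((1-p)/p) * M ω / L`. -/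
theorem stmt_7 {E Ω K : Type*} [NormedAddCommGroup E]
    [Fintype Ω] [Nonempty Ω] [Fintype K] [Nonempty K]
    (p : ℝ) (hp : 1 ≤ p) (L : ℝ) (hL : 0 < L)
    (f : E → Ω × K → ℝ)
    (hf : ∀ X₁ X₂ : E, (∑ ωk : Ω × K, |f X₁ ωk - f X₂ ωk| ^ p) ^ (1 / p) ≤ L * ‖X₁ - X₂‖)
    (X : E) (Y : Ω → K) (M : Ω → ℝ)
    (hM : ∀ ω, M ω = f X (ω, Y ω) - ⨆ k : {k : K // k ≠ Y ω}, f X (ω, (k : K)))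
    (ε : ℝ) (hε : 0 ≤ ε) (X' : E) (hX' : ‖X' - X‖ ≤ ε)
    (S : Finset Ω)
    (hS : S = Finset.univ.filter fun ω =>
      0 < M ω ∧ ∃ k, k ≠ Y ω ∧ f X' (ω, Y ω) ≤ f X' (ω, k)) :
    (∑ ω ∈ S, 2 ^ (1 - p) * M ω ^ p ≤ (L * ε) ^ p) ∧
    (∑ ω ∈ S, (2 ^ ((1 - p) / p) * M ω / L) ^ p ≤ ε ^ p) := by
  have hp0 : (0:ℝ) < p := lt_of_lt_of_le one_pos hp
  set g : Ω × K → ℝ := fun c => |f X' c - f X c| ^ p with hg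
  have hgnn : ∀ c, 0 ≤ g c := fun c => Real.rpow_nonneg (abs_nonneg _) _
  -- membership facts
  have hmem : ∀ ω ∈ S, 0 < M ω ∧ ∃ k, k ≠ Y ω ∧ f X' (ω, Y ω) ≤ f X' (ω, k) := by
    intro ω hω
    rw [hS, Finset.mem_filter] at hω
    exact hω.2
  -- key per-pixel bound
  have key : ∀ ω ∈ S, 2 ^ (1 - p) * M ω ^ p ≤ ∑ k, g (ω, k) := by
    intro ω hω
    obtain ⟨hMpos, k, hk, hflip⟩ := hmem ω hω
    have hsup : f X (ω, k) ≤ ⨆ k : {k : K // k ≠ Y ω}, f X (ω, (k : K)) :=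
      le_ciSup (f := fun k : {k : K // k ≠ Y ω} => f X (ω, (k : K)))
        (Set.Finite.bddAbove (Set.finite_range _)) ⟨k, hk⟩
    have hMle : M ω ≤ f X (ω, Y ω) - f X (ω, k) := by
      rw [hM ω]; linarith
    set x := |f X' (ω, Y ω) - f X (ω, Y ω)| with hx
    set y := |f X' (ω, k) - f X (ω, k)| with hy
    have hxy : M ω ≤ x + y := by
      have h1 : f X (ω, Y ω) - f X' (ω, Y ω) ≤ x := by
        rw [hx, abs_sub_comm]; exact le_abs_self _
      have h2 : f X' (ω, k) - f X (ω, k) ≤ y := le_abs_self _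
      linarith
    have h1 : M ω ^ p ≤ (x + y) ^ p :=
      Real.rpow_le_rpow hMpos.le hxy hp0.le
    have h2 : (x + y) ^ p ≤ 2 ^ (p - 1) * (x ^ p + y ^ p) :=
      real_mean2 (abs_nonneg _) (abs_nonneg _) hp
    have h3 : 2 ^ (1 - p) * M ω ^ p ≤ x ^ p + y ^ p := by
      have h4 : 2 ^ (1 - p) * M ω ^ p ≤ 2 ^ (1 - p) * (2 ^ (p - 1) * (x ^ p + y ^ p)) := by
        apply mul_le_mul_of_nonneg_left (h1.trans h2) (Real.rpow_nonneg (by norm_num) _)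
      calc 2 ^ (1 - p) * M ω ^ p ≤ 2 ^ (1 - p) * (2 ^ (p - 1) * (x ^ p + y ^ p)) := h4
        _ = x ^ p + y ^ p := by
          rw [← mul_assoc, ← Real.rpow_add (by norm_num : (0:ℝ) < 2)]
          norm_num
    have h5 : x ^ p + y ^ p = ∑ k' ∈ ({Y ω, k} : Finset K), g (ω, k') := by
      rw [Finset.sum_pair (Ne.symm hk)]
    have h6 : ∑ k' ∈ ({Y ω, k} : Finset K), g (ω, k') ≤ ∑ k', g (ω, k') :=
      Finset.sum_le_sum_of_subset_of_nonneg (Finset.subset_univ _)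
        (fun i _ _ => hgnn _)
    linarith
  -- total bound
  have hsum1 : ∑ ω ∈ S, 2 ^ (1 - p) * M ω ^ p ≤ ∑ c : Ω × K, g c := by
    calc ∑ ω ∈ S, 2 ^ (1 - p) * M ω ^ p ≤ ∑ ω ∈ S, ∑ k, g (ω, k) :=
          Finset.sum_le_sum key
      _ ≤ ∑ ω : Ω, ∑ k, g (ω, k) :=
          Finset.sum_le_sum_of_subset_of_nonneg (Finset.subset_univ _)
            (fun i _ _ => Finset.sum_nonneg fun _ _ => hgnn _)
      _ = ∑ c : Ω × K, g c := by rw [← Fintype.sum_prod_type]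
  have hsumg : ∑ c : Ω × K, g c ≤ (L * ε) ^ p := by
    have h1 : (∑ c : Ω × K, g c) ^ (1 / p) ≤ L * ε := by
      refine (hf X' X).trans ?_
      exact mul_le_mul_of_nonneg_left hX' hL.le
    have h2 : ((∑ c : Ω × K, g c) ^ (1 / p)) ^ p ≤ (L * ε) ^ p :=
      Real.rpow_le_rpow (Real.rpow_nonneg (Finset.sum_nonneg fun _ _ => hgnn _) _) h1 hp0.le
    rwa [← Real.rpow_mul (Finset.sum_nonneg fun _ _ => hgnn _),
      one_div_mul_cancel hp0.ne', Real.rpow_one] at h2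
  have first : ∑ ω ∈ S, 2 ^ (1 - p) * M ω ^ p ≤ (L * ε) ^ p := hsum1.trans hsumg
  refine ⟨first, ?_⟩
  have hLp : (0:ℝ) < L ^ p := Real.rpow_pos_of_pos hL _
  have hterm : ∀ ω ∈ S, (2 ^ ((1 - p) / p) * M ω / L) ^ p
      = 2 ^ (1 - p) * M ω ^ p / L ^ p := by
    intro ω hω
    have hMpos := (hmem ω hω).1
    rw [Real.div_rpow (mul_nonneg (Real.rpow_nonneg (by norm_num) _) hMpos.le) hL.le,
      Real.mul_rpow (Real.rpow_nonneg (by norm_num) _) hMpos.le,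
      ← Real.rpow_mul (by norm_num : (0:ℝ) ≤ 2), div_mul_cancel₀ _ hp0.ne']
  calc ∑ ω ∈ S, (2 ^ ((1 - p) / p) * M ω / L) ^ p
      = ∑ ω ∈ S, 2 ^ (1 - p) * M ω ^ p / L ^ p := Finset.sum_congr rfl hterm
    _ = (∑ ω ∈ S, 2 ^ (1 - p) * M ω ^ p) / L ^ p := by rw [Finset.sum_div]
    _ ≤ (L * ε) ^ p / L ^ p := div_le_div_of_nonneg_right first hLp.le
    _ = ε ^ p := by
        rw [Real.mul_rpow hL.le hε, mul_comm, mul_div_assoc, div_self hLp.ne', mul_one]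
end

section
/- Let E be a normed space, Ω and K finite nonempty types, p ≥ 1 a real number, and let f : E → (Ω × K → ℝ) be L-Lipschitz (L > 0) where the output space carries the ℓp norm over all Ω × K coordinates. Fix X ∈ E, labels Y : Ω → K, a nonempty subset S ⊆ Ω, and ε ≥ 0. For ω ∈ Ω set R^ω(X,Y) = 2^{(1−p)/p}·max(M_ω, 0) / L with M_ω = f(X)(ω, Y(ω)) − max_{k ≠ Y(ω)} f(X)(ω, k). Let N be the maximum cardinality of a subset T ⊆ S with ∑_{ω ∈ T} R^ω(X,Y)^p ≤ ε^p. Then for every X̃ ∈ E with ‖X̃ − X‖ ≤ ε, the number of pixels ω ∈ S that are not strictly correctly classified at X̃ (i.e. for which some k ≠ Y(ω) has f(X̃)(ω, k) ≥ f(X̃)(ω, Y(ω))) is at most N; consequently the pixel accuracy on S at X̃, namely (1/|S|)·#{ω ∈ S : f(X̃)(ω, Y(ω)) > f(X̃)(ω, k) for all k ≠ Y(ω)}, is at least 1 − N/|S| (the Certifiably Robust Pixel Accuracy CRPA_ε(X)). -/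
open scoped Classical

open scoped NNReal in
lemma two_rpow_aux {a b p : ℝ} (ha : 0 ≤ a) (hb : 0 ≤ b) (hp : 1 ≤ p) :
    (a + b) ^ p ≤ 2 ^ (p - 1) * (a ^ p + b ^ p) := by
  have h := NNReal.rpow_add_le_mul_rpow_add_rpow a.toNNReal b.toNNReal hp
  have h2 : (((a.toNNReal + b.toNNReal) ^ p : ℝ≥0) : ℝ) ≤
      (((2 : ℝ≥0) ^ (p - 1) * (a.toNNReal ^ p + b.toNNReal ^ p) : ℝ≥0) : ℝ) :=
    NNReal.coe_le_coe.2 h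
  push_cast at h2
  rwa [Real.coe_toNNReal a ha, Real.coe_toNNReal b hb] at h2

set_option maxHeartbeats 1000000 in
/-- Certifiably Robust Pixel Accuracy. -/
theorem stmt_8 {E Ω K : Type*} [NormedAddCommGroup E]
    [Fintype Ω] [Nonempty Ω] [Fintype K] [Nonempty K]
    (p : ℝ) (hp : 1 ≤ p) (L : ℝ) (hL : 0 < L)
    (f : E → Ω × K → ℝ)
    (hf : ∀ X₁ X₂ : E, (∑ ωk : Ω × K, |f X₁ ωk - f X₂ ωk| ^ p) ^ (1 / p) ≤ L * ‖X₁ - X₂‖)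
    (X : E) (Y : Ω → K) (M : Ω → ℝ)
    (hM : ∀ ω, M ω = f X (ω, Y ω) - ⨆ k : {k : K // k ≠ Y ω}, f X (ω, (k : K)))
    (R : Ω → ℝ) (hR : ∀ ω, R ω = 2 ^ ((1 - p) / p) * max (M ω) 0 / L)
    (S : Finset Ω) (hSne : S.Nonempty) (ε : ℝ) (hε : 0 ≤ ε)
    (N : ℕ)
    (hN : IsGreatest {m : ℕ | ∃ T ⊆ S, T.card = m ∧ ∑ ω ∈ T, R ω ^ p ≤ ε ^ p} N) :
    ∀ X' : E, ‖X' - X‖ ≤ ε →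
      (S.filter fun ω => ∃ k, k ≠ Y ω ∧ f X' (ω, Y ω) ≤ f X' (ω, k)).card ≤ N ∧
      1 - (N : ℝ) / S.card ≤
        ((S.filter fun ω => ∀ k, k ≠ Y ω → f X' (ω, k) < f X' (ω, Y ω)).card : ℝ) / S.card := by
  intro X' hX'
  have hp0 : (0:ℝ) < p := lt_of_lt_of_le one_pos hp
  have hpne : p ≠ 0 := ne_of_gt hp0
  set T := S.filter (fun ω => ∃ k, k ≠ Y ω ∧ f X' (ω, Y ω) ≤ f X' (ω, k)) with hTdef
  have hTS : T ⊆ S := Finset.filter_subset _ _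
  have hwit : ∀ ω ∈ T, ∃ k, k ≠ Y ω ∧ f X' (ω, Y ω) ≤ f X' (ω, k) :=
    fun ω hω => (Finset.mem_filter.mp hω).2
  choose! g hg1 hg2 using hwit
  have hdnn : ∀ q : Ω × K, (0:ℝ) ≤ |f X' q - f X q| := fun q => abs_nonneg _
  -- per-pixel bound
  have key : ∀ ω ∈ T, R ω ^ p ≤
      (|f X' (ω, Y ω) - f X (ω, Y ω)| ^ p + |f X' (ω, g ω) - f X (ω, g ω)| ^ p) / L ^ p := by
    intro ω hω
    have ha : (0:ℝ) ≤ |f X' (ω, Y ω) - f X (ω, Y ω)| := abs_nonneg _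
    have hb : (0:ℝ) ≤ |f X' (ω, g ω) - f X (ω, g ω)| := abs_nonneg _
    have hm0 : (0:ℝ) ≤ max (M ω) 0 := le_max_right _ _
    have hMle : M ω ≤ |f X' (ω, Y ω) - f X (ω, Y ω)| + |f X' (ω, g ω) - f X (ω, g ω)| := by
      have hsup : f X (ω, (g ω : K)) ≤ ⨆ k : {k : K // k ≠ Y ω}, f X (ω, (k : K)) :=
        le_ciSup (f := fun k : {k : K // k ≠ Y ω} => f X (ω, (k : K)))
          (Set.Finite.bddAbove (Set.finite_range _)) ⟨g ω, hg1 ω hω⟩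
      have h1 : f X (ω, Y ω) - f X' (ω, Y ω) ≤ |f X' (ω, Y ω) - f X (ω, Y ω)| := by
        rw [abs_sub_comm]; exact le_abs_self _
      have h2 : f X' (ω, g ω) - f X (ω, g ω) ≤ |f X' (ω, g ω) - f X (ω, g ω)| := le_abs_self _
      have h3 : f X' (ω, Y ω) ≤ f X' (ω, g ω) := hg2 ω hω
      have h4 := hM ω
      linarith
    have hmle : max (M ω) 0 ≤ |f X' (ω, Y ω) - f X (ω, Y ω)| + |f X' (ω, g ω) - f X (ω, g ω)| :=
      max_le hMle (by linarith)
    have hmp : max (M ω) 0 ^ p ≤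
        (|f X' (ω, Y ω) - f X (ω, Y ω)| + |f X' (ω, g ω) - f X (ω, g ω)|) ^ p :=
      Real.rpow_le_rpow hm0 hmle hp0.le
    have hab := two_rpow_aux ha hb hp
    have hRp : R ω ^ p = 2 ^ (1 - p) * max (M ω) 0 ^ p / L ^ p := by
      rw [hR ω, Real.div_rpow (by positivity) hL.le,
        Real.mul_rpow (by positivity) hm0,
        ← Real.rpow_mul (by norm_num : (0:ℝ) ≤ 2), div_mul_cancel₀ _ hpne]
    rw [hRp]
    have h2p : (2:ℝ) ^ (1 - p) *
        (2 ^ (p - 1) * (|f X' (ω, Y ω) - f X (ω, Y ω)| ^ p + |f X' (ω, g ω) - f X (ω, g ω)| ^ p))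
        = |f X' (ω, Y ω) - f X (ω, Y ω)| ^ p + |f X' (ω, g ω) - f X (ω, g ω)| ^ p := by
      rw [← mul_assoc, ← Real.rpow_add (by norm_num : (0:ℝ) < 2)]
      norm_num
    calc 2 ^ (1 - p) * max (M ω) 0 ^ p / L ^ p
        ≤ 2 ^ (1 - p) * (2 ^ (p - 1) *
          (|f X' (ω, Y ω) - f X (ω, Y ω)| ^ p + |f X' (ω, g ω) - f X (ω, g ω)| ^ p)) / L ^ p := by
          gcongr
          exact hmp.trans hab
      _ = _ := by rw [h2p]
  -- global bound
  have hsum2 : ∑ q : Ω × K, |f X' q - f X q| ^ p ≤ (L * ε) ^ p := by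
    have h1 : (∑ q : Ω × K, |f X' q - f X q| ^ p) ^ (1 / p) ≤ L * ε :=
      (hf X' X).trans (mul_le_mul_of_nonneg_left hX' hL.le)
    have hs0 : (0:ℝ) ≤ ∑ q : Ω × K, |f X' q - f X q| ^ p :=
      Finset.sum_nonneg fun q _ => Real.rpow_nonneg (hdnn q) p
    have h2 := Real.rpow_le_rpow (Real.rpow_nonneg hs0 _) h1 hp0.le
    rwa [← Real.rpow_mul hs0, one_div, inv_mul_cancel₀ hpne, Real.rpow_one] at h2
  have hsum1 : ∑ ω ∈ T, R ω ^ p ≤ ε ^ p := by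
    have step2 : ∑ ω ∈ T, (|f X' (ω, Y ω) - f X (ω, Y ω)| ^ p + |f X' (ω, g ω) - f X (ω, g ω)| ^ p)
        ≤ ∑ q : Ω × K, |f X' q - f X q| ^ p := by
      calc ∑ ω ∈ T, (|f X' (ω, Y ω) - f X (ω, Y ω)| ^ p + |f X' (ω, g ω) - f X (ω, g ω)| ^ p)
          ≤ ∑ ω ∈ T, ∑ k : K, |f X' (ω, k) - f X (ω, k)| ^ p := by
            apply Finset.sum_le_sum
            intro ω hω
            have hpair := Finset.sum_pair (f := fun k : K => |f X' (ω, k) - f X (ω, k)| ^ p)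
              (Ne.symm (hg1 ω hω))
            rw [← hpair]
            apply Finset.sum_le_sum_of_subset_of_nonneg (Finset.subset_univ _)
            intro k _ _
            exact Real.rpow_nonneg (hdnn _) p
        _ ≤ ∑ ω : Ω, ∑ k : K, |f X' (ω, k) - f X (ω, k)| ^ p := by
            apply Finset.sum_le_sum_of_subset_of_nonneg (Finset.subset_univ _)
            intro ω _ _
            exact Finset.sum_nonneg fun k _ => Real.rpow_nonneg (hdnn _) p
        _ = ∑ q : Ω × K, |f X' q - f X q| ^ p := (Fintype.sum_prod_type (fun q : Ω × K => |f X' q - f X q| ^ p)).symm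
    have hLp : (0:ℝ) < L ^ p := Real.rpow_pos_of_pos hL p
    calc ∑ ω ∈ T, R ω ^ p
        ≤ ∑ ω ∈ T, (|f X' (ω, Y ω) - f X (ω, Y ω)| ^ p + |f X' (ω, g ω) - f X (ω, g ω)| ^ p) / L ^ p :=
          Finset.sum_le_sum key
      _ = (∑ ω ∈ T, (|f X' (ω, Y ω) - f X (ω, Y ω)| ^ p + |f X' (ω, g ω) - f X (ω, g ω)| ^ p)) / L ^ p :=
          (Finset.sum_div _ _ _).symm
      _ ≤ (L * ε) ^ p / L ^ p := by gcongr; exact step2.trans hsum2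
      _ = ε ^ p := by
          rw [Real.mul_rpow hL.le hε, mul_comm, mul_div_assoc, div_self hLp.ne', mul_one]
  have hcard : T.card ≤ N := hN.2 ⟨T, hTS, rfl, hsum1⟩
  refine ⟨hcard, ?_⟩
  have hcompl : (S.filter fun ω => ∀ k, k ≠ Y ω → f X' (ω, k) < f X' (ω, Y ω)).card + T.card
      = S.card := by
    rw [hTdef]
    have hfe : (S.filter fun ω => ∃ k, k ≠ Y ω ∧ f X' (ω, Y ω) ≤ f X' (ω, k)) =
        (S.filter fun ω => ¬ ∀ k, k ≠ Y ω → f X' (ω, k) < f X' (ω, Y ω)) := by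
      apply Finset.filter_congr
      intro ω _
      simp only [not_forall, not_lt]
      constructor
      · rintro ⟨k, hk, hle⟩; exact ⟨k, hk, hle⟩
      · rintro ⟨k, hk, hle⟩; exact ⟨k, hk, hle⟩
    rw [hfe]
    exact Finset.card_filter_add_card_filter_not _
  have hS0 : (0:ℝ) < S.card := by exact_mod_cast Finset.card_pos.mpr hSne
  rw [sub_le_iff_le_add, ← add_div, le_div_iff₀ hS0, one_mul]
  have h2 : (S.card : ℝ) =
      ((S.filter fun ω => ∀ k, k ≠ Y ω → f X' (ω, k) < f X' (ω, Y ω)).card : ℝ) + T.card := by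
    exact_mod_cast hcompl.symm
  have h3 : (T.card : ℝ) ≤ N := by exact_mod_cast hcard
  linarith
end

section
/- Let E be a normed space, Ω and K finite nonempty types, p ≥ 1 a real number, and let f : E → (Ω × K → ℝ) be L-Lipschitz (L > 0) where the output space carries the ℓp norm over all Ω × K coordinates. Fix X ∈ E, labels Y : Ω → K, a subset S ⊆ Ω, and an integer n with 1 ≤ n ≤ |S|. For ω ∈ Ω set R^ω(X,Y) = 2^{(1−p)/p}·max(M_ω, 0) / L with M_ω = f(X)(ω, Y(ω)) − max_{k ≠ Y(ω)} f(X)(ω, k). If X̃ ∈ E is such that at least n pixels ω ∈ S are not strictly correctly classified at X̃ (i.e. for each such ω, some k ≠ Y(ω) has f(X̃)(ω, k) ≥ f(X̃)(ω, Y(ω))), then ‖X̃ − X‖^p ≥ min over all subsets T ⊆ S with |T| = n of ∑_{ω ∈ T} R^ω(X,Y)^p; this minimum is the sum of the n smallest values R^ω(X,Y)^p over ω ∈ S, and hence is a lower bound on the generalized robustness radius for driving the pixel accuracy on S below 1 − n/|S|. -/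
open scoped Classical

private lemma real_pow_mean (p : ℝ) (hp : 1 ≤ p) (a b : ℝ) (ha : 0 ≤ a) (hb : 0 ≤ b) :
    (a + b) ^ p ≤ 2 ^ (p - 1) * (a ^ p + b ^ p) := by
  have h := NNReal.rpow_add_le_mul_rpow_add_rpow a.toNNReal b.toNNReal hp
  have := NNReal.coe_le_coe.2 h
  push_cast [NNReal.coe_rpow] at this
  rwa [Real.coe_toNNReal a ha, Real.coe_toNNReal b hb] at this

private lemma aux_pair (p : ℝ) (hp : 1 ≤ p) (m a b : ℝ) (hm : 0 ≤ m) (ha : 0 ≤ a) (hb : 0 ≤ b)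
    (h : m ≤ a + b) : 2 ^ (1 - p) * m ^ p ≤ a ^ p + b ^ p := by
  have h1 : m ^ p ≤ (a + b) ^ p := Real.rpow_le_rpow hm h (le_trans zero_le_one hp)
  have h2 : (a + b) ^ p ≤ 2 ^ (p - 1) * (a ^ p + b ^ p) := real_pow_mean p hp a b ha hb
  have h3 : (2 : ℝ) ^ (1 - p) * 2 ^ (p - 1) = 1 := by
    rw [← Real.rpow_add (by norm_num)]; norm_num
  have h4 : (0 : ℝ) < 2 ^ (1 - p) := Real.rpow_pos_of_pos (by norm_num) _
  calc 2 ^ (1 - p) * m ^ p ≤ 2 ^ (1 - p) * (2 ^ (p - 1) * (a ^ p + b ^ p)) :=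
        mul_le_mul_of_nonneg_left (h1.trans h2) h4.le
    _ = (2 ^ (1 - p) * 2 ^ (p - 1)) * (a ^ p + b ^ p) := by ring
    _ = a ^ p + b ^ p := by rw [h3, one_mul]

/-- Generalized robustness radius lower bound for pixel accuracy. With
`f : E → (Ω × K → ℝ)` an `L`-Lipschitz segmentation model (`L > 0`, ℓp output norm, `p ≥ 1`),
pixel certificates `R ω = 2^((1-p)/p) * max (M ω) 0 / L`, `S ⊆ Ω`, and `1 ≤ n ≤ |S|`: if at
least `n` pixels of `S` are not strictly correctly classified at `X̃`, then `‖X̃ - X‖^p` is at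
least the minimum over subsets `T ⊆ S` with `|T| = n` of `∑_{ω ∈ T} (R ω)^p`. -/
theorem stmt_9 {E Ω K : Type*} [NormedAddCommGroup E]
    [Fintype Ω] [Nonempty Ω] [Fintype K] [Nonempty K]
    (p : ℝ) (hp : 1 ≤ p) (L : ℝ) (hL : 0 < L)
    (f : E → Ω × K → ℝ)
    (hf : ∀ X₁ X₂ : E, (∑ ωk : Ω × K, |f X₁ ωk - f X₂ ωk| ^ p) ^ (1 / p) ≤ L * ‖X₁ - X₂‖)
    (X : E) (Y : Ω → K) (M : Ω → ℝ)
    (hM : ∀ ω, M ω = f X (ω, Y ω) - ⨆ k : {k : K // k ≠ Y ω}, f X (ω, (k : K)))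
    (R : Ω → ℝ) (hR : ∀ ω, R ω = 2 ^ ((1 - p) / p) * max (M ω) 0 / L)
    (S : Finset Ω) (n : ℕ) (hn1 : 1 ≤ n) (hnS : n ≤ S.card)
    (X' : E)
    (hflip : n ≤ (S.filter fun ω => ∃ k, k ≠ Y ω ∧ f X' (ω, Y ω) ≤ f X' (ω, k)).card) :
    sInf {r : ℝ | ∃ T ⊆ S, T.card = n ∧ r = ∑ ω ∈ T, R ω ^ p} ≤ ‖X' - X‖ ^ p := by
  have hp0 : (0 : ℝ) < p := lt_of_lt_of_le one_pos hp
  have hpne : p ≠ 0 := hp0.ne'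
  have hRnn : ∀ ω, 0 ≤ R ω := by
    intro ω
    rw [hR ω]
    exact div_nonneg (mul_nonneg (Real.rpow_pos_of_pos (by norm_num) _).le
      (le_max_right _ _)) hL.le
  -- pick T
  obtain ⟨T, hTF, hTcard⟩ := Finset.exists_subset_card_eq hflip
  have hTS : T ⊆ S := hTF.trans (Finset.filter_subset _ _)
  have hmem : (∑ ω ∈ T, R ω ^ p) ∈ {r : ℝ | ∃ T ⊆ S, T.card = n ∧ r = ∑ ω ∈ T, R ω ^ p} :=
    ⟨T, hTS, hTcard, rfl⟩
  have hbdd : BddBelow {r : ℝ | ∃ T ⊆ S, T.card = n ∧ r = ∑ ω ∈ T, R ω ^ p} := by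
    refine ⟨0, ?_⟩
    rintro r ⟨T', -, -, rfl⟩
    exact Finset.sum_nonneg fun ω _ => Real.rpow_nonneg (hRnn ω) p
  refine le_trans (csInf_le hbdd hmem) ?_
  -- differences
  set D : Ω × K → ℝ := fun ωk => |f X' ωk - f X ωk| with hD
  have hDnn : ∀ ωk, 0 ≤ D ωk := fun ωk => abs_nonneg _
  have hDpnn : ∀ ωk, 0 ≤ D ωk ^ p := fun ωk => Real.rpow_nonneg (hDnn ωk) p
  -- total bound
  have hAnn : 0 ≤ ∑ ωk : Ω × K, D ωk ^ p := Finset.sum_nonneg fun ωk _ => hDpnn ωk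
  have htot : ∑ ωk : Ω × K, D ωk ^ p ≤ (L * ‖X' - X‖) ^ p := by
    have h := hf X' X
    have h2 : ((∑ ωk : Ω × K, D ωk ^ p) ^ (1 / p)) ^ p ≤ (L * ‖X' - X‖) ^ p :=
      Real.rpow_le_rpow (Real.rpow_nonneg hAnn _) h hp0.le
    rwa [← Real.rpow_mul hAnn, one_div, inv_mul_cancel₀ hpne, Real.rpow_one] at h2
  -- per pixel bound
  have hpix : ∀ ω ∈ T, L ^ p * R ω ^ p ≤ ∑ k : K, D (ω, k) ^ p := by
    intro ω hωT
    have hωF := hTF hωT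
    rw [Finset.mem_filter] at hωF
    obtain ⟨-, k, hk, hflipk⟩ := hωF
    -- margin bound
    have hsup : f X (ω, k) ≤ ⨆ k' : {k' : K // k' ≠ Y ω}, f X (ω, (k' : K)) :=
      le_ciSup (f := fun k' : {k' : K // k' ≠ Y ω} => f X (ω, (k' : K)))
        (Set.Finite.bddAbove (Set.finite_range _)) (⟨k, hk⟩ : {k' : K // k' ≠ Y ω})
    have habs1 : f X (ω, Y ω) - f X' (ω, Y ω) ≤ D (ω, Y ω) := by
      rw [hD]; dsimp only
      rw [abs_sub_comm]; exact le_abs_self _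
    have habs2 : f X' (ω, k) - f X (ω, k) ≤ D (ω, k) := le_abs_self _
    have hm : max (M ω) 0 ≤ D (ω, Y ω) + D (ω, k) := by
      rw [hM ω]
      refine max_le (by linarith) (by positivity)
    have key : 2 ^ (1 - p) * (max (M ω) 0) ^ p ≤ D (ω, Y ω) ^ p + D (ω, k) ^ p :=
      aux_pair p hp _ _ _ (le_max_right _ _) (hDnn _) (hDnn _) hm
    -- rewrite L^p * R ω ^ p
    have hLpne : L ^ p ≠ 0 := (Real.rpow_pos_of_pos hL p).ne'
    have hLR : L ^ p * R ω ^ p = 2 ^ (1 - p) * (max (M ω) 0) ^ p := by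
      have hRp : R ω ^ p = (2 ^ ((1 - p) / p)) ^ p * (max (M ω) 0) ^ p / L ^ p := by
        rw [hR ω, Real.div_rpow (by positivity) hL.le,
          Real.mul_rpow (by positivity) (le_max_right _ _)]
      have hcp : ((2 : ℝ) ^ ((1 - p) / p)) ^ p = 2 ^ (1 - p) := by
        rw [← Real.rpow_mul (by norm_num), div_mul_cancel₀ _ hpne]
      rw [hRp, hcp]
      field_simp
    rw [hLR]
    refine key.trans ?_
    have : D (ω, Y ω) ^ p + D (ω, k) ^ p = ∑ k' ∈ ({Y ω, k} : Finset K), D (ω, k') ^ p := by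
      rw [Finset.sum_pair (Ne.symm hk)]
    rw [this]
    exact Finset.sum_le_sum_of_subset_of_nonneg (Finset.subset_univ _)
      (fun k' _ _ => hDpnn _)
  -- combine
  have hsum : L ^ p * ∑ ω ∈ T, R ω ^ p ≤ ∑ ωk : Ω × K, D ωk ^ p := by
    rw [Finset.mul_sum]
    calc ∑ ω ∈ T, L ^ p * R ω ^ p ≤ ∑ ω ∈ T, ∑ k : K, D (ω, k) ^ p :=
          Finset.sum_le_sum hpix
      _ ≤ ∑ ω : Ω, ∑ k : K, D (ω, k) ^ p :=
          Finset.sum_le_sum_of_subset_of_nonneg (Finset.subset_univ _)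
            (fun ω _ _ => Finset.sum_nonneg fun k _ => hDpnn _)
      _ = ∑ ωk : Ω × K, D ωk ^ p := by rw [Fintype.sum_prod_type]
  have hLp : (0 : ℝ) < L ^ p := Real.rpow_pos_of_pos hL p
  have : L ^ p * ∑ ω ∈ T, R ω ^ p ≤ L ^ p * ‖X' - X‖ ^ p := by
    rw [Real.mul_rpow hL.le (norm_nonneg _)] at htot
    exact hsum.trans htot
  exact le_of_mul_le_mul_left this hLp
end

section
/- Let E be a normed space, Ω and K finite nonempty types, p ≥ 1 a real number, and let f : E → (Ω × K → ℝ) be L-Lipschitz (L > 0) where the output space carries the ℓp norm over all Ω × K coordinates. Fix X ∈ E and a pixel ω ∈ Ω, let ĵ ∈ K be such that f(X)(ω, ĵ) ≥ f(X)(ω, k) + M_ω^stab for all k ≠ ĵ, where M_ω^stab = f(X)(ω, ĵ) − max_{k ≠ ĵ} f(X)(ω, k) > 0. Then for every X̃ ∈ E with ‖X̃ − X‖ < 2^{(1−p)/p}·M_ω^stab / L, one has f(X̃)(ω, ĵ) > f(X̃)(ω, k) for all k ≠ ĵ, i.e. the predicted class at pixel ω is unchanged; thus R_stab^ω(X) =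 2^{(1−p)/p}·M_ω^stab / L is a stability certificate for pixel ω that requires no ground-truth label. -/
private lemma aux_two_rpow {p : ℝ} (hp : 1 ≤ p) {a b : ℝ} (ha : 0 ≤ a) (hb : 0 ≤ b) :
    (a + b) ^ p ≤ 2 ^ (p - 1) * (a ^ p + b ^ p) := by
  have h := NNReal.rpow_add_le_mul_rpow_add_rpow a.toNNReal b.toNNReal hp
  have := (NNReal.coe_le_coe).2 h
  push_cast at this
  rwa [Real.coe_toNNReal a ha, Real.coe_toNNReal b hb] at this

/-- Pixel stability certificate (no ground-truth label needed). With
`f : E → (Ω × K → ℝ)` an `L`-Lipschitz segmentation model (`L > 0`, ℓp output norm, `p ≥ 1`),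
a pixel `ω`, and a predicted class `jhat` whose stability margin `Mstab > 0` satisfies
`f X (ω, jhat) ≥ f X (ω, k) + Mstab` for all `k ≠ jhat`: every `X̃` with
`‖X̃ - X‖ < 2^((1-p)/p) * Mstab / L` has the same prediction `jhat` at pixel `ω`. -/
theorem stmt_10 {E Ω K : Type*} [NormedAddCommGroup E]
    [Fintype Ω] [Nonempty Ω] [Fintype K] [Nonempty K]
    (p : ℝ) (hp : 1 ≤ p) (L : ℝ) (hL : 0 < L)
    (f : E → Ω × K → ℝ)
    (hf : ∀ X₁ X₂ : E, (∑ ωk : Ω × K, |f X₁ ωk - f X₂ ωk| ^ p) ^ (1 / p) ≤ L * ‖X₁ - X₂‖)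
    (X : E) (ω : Ω) (jhat : K) (Mstab : ℝ) (hMpos : 0 < Mstab)
    (hMstab : Mstab = f X (ω, jhat) - ⨆ k : {k : K // k ≠ jhat}, f X (ω, (k : K)))
    (hmargin : ∀ k, k ≠ jhat → f X (ω, k) + Mstab ≤ f X (ω, jhat)) :
    ∀ X' : E, ‖X' - X‖ < 2 ^ ((1 - p) / p) * Mstab / L →
      ∀ k, k ≠ jhat → f X' (ω, k) < f X' (ω, jhat) := by
  classical
  intro X' hball k hk
  have hp0 : 0 < p := lt_of_lt_of_le one_pos hp
  set a := |f X' (ω, jhat) - f X (ω, jhat)| with ha_def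
  set b := |f X' (ω, k) - f X (ω, k)| with hb_def
  have ha : 0 ≤ a := abs_nonneg _
  have hb : 0 ≤ b := abs_nonneg _
  set δ := L * ‖X' - X‖ with hδ_def
  have hδ0 : 0 ≤ δ := mul_nonneg hL.le (norm_nonneg _)
  set S := ∑ ωk : Ω × K, |f X' ωk - f X ωk| ^ p with hS_def
  have hSnn : 0 ≤ S := Finset.sum_nonneg fun i _ => Real.rpow_nonneg (abs_nonneg _) _
  have hS1 : S ^ (1 / p) ≤ δ := hf X' X
  have hSδ : S ≤ δ ^ p := by
    have h := Real.rpow_le_rpow (Real.rpow_nonneg hSnn _) hS1 hp0.le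
    rwa [← Real.rpow_mul hSnn, one_div, inv_mul_cancel₀ hp0.ne', Real.rpow_one] at h
  have habS : a ^ p + b ^ p ≤ S := by
    have hne : ((ω, jhat) : Ω × K) ≠ (ω, k) := by
      simp [Prod.ext_iff, (Ne.symm hk)]
    have h := Finset.sum_le_sum_of_subset_of_nonneg (f := fun i => |f X' i - f X i| ^ p)
      (Finset.subset_univ ({(ω, jhat), (ω, k)} : Finset (Ω × K)))
      (fun i _ _ => Real.rpow_nonneg (abs_nonneg _) p)
    rwa [Finset.sum_pair hne] at h
  have hkey : (a + b) ^ p ≤ (2 ^ ((p - 1) / p) * δ) ^ p := by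
    calc (a + b) ^ p ≤ 2 ^ (p - 1) * (a ^ p + b ^ p) := aux_two_rpow hp ha hb
      _ ≤ 2 ^ (p - 1) * (δ ^ p) := by
          exact mul_le_mul_of_nonneg_left (habS.trans hSδ)
            (Real.rpow_nonneg (by norm_num) _)
      _ = (2 ^ ((p - 1) / p) * δ) ^ p := by
          rw [Real.mul_rpow (Real.rpow_nonneg (by norm_num) _) hδ0,
            ← Real.rpow_mul (by norm_num : (0:ℝ) ≤ 2), div_mul_cancel₀ _ hp0.ne']
  have hab : a + b ≤ 2 ^ ((p - 1) / p) * δ := by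
    have h2 : 0 ≤ (2 : ℝ) ^ ((p - 1) / p) * δ :=
      mul_nonneg (Real.rpow_nonneg (by norm_num) _) hδ0
    exact (Real.rpow_le_rpow_iff (add_nonneg ha hb) h2 hp0).mp hkey
  have hδlt : δ < 2 ^ ((1 - p) / p) * Mstab := by
    calc δ < L * (2 ^ ((1 - p) / p) * Mstab / L) :=
          mul_lt_mul_of_pos_left hball hL
      _ = 2 ^ ((1 - p) / p) * Mstab := by field_simp
  have habM : a + b < Mstab := by
    have h2pos : (0:ℝ) < 2 ^ ((p - 1) / p) := Real.rpow_pos_of_pos (by norm_num) _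
    calc a + b ≤ 2 ^ ((p - 1) / p) * δ := hab
      _ < 2 ^ ((p - 1) / p) * (2 ^ ((1 - p) / p) * Mstab) :=
          mul_lt_mul_of_pos_left hδlt h2pos
      _ = Mstab := by
          rw [← mul_assoc, ← Real.rpow_add (by norm_num)]
          have : (p - 1) / p + (1 - p) / p = 0 := by field_simp; ring
          rw [this, Real.rpow_zero, one_mul]
  have h1 : f X (ω, jhat) - f X' (ω, jhat) ≤ a := by
    rw [ha_def, abs_sub_comm]; exact le_abs_self _
  have h2 : f X' (ω, k) - f X (ω, k) ≤ b := le_abs_self _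
  have h3 := hmargin k hk
  linarith
end

section
/- Let E be a normed space, Ω and K finite nonempty types, p ≥ 1 a real number, and let f : E → (Ω × K → ℝ) be L-Lipschitz (L > 0) where the output space carries the ℓp norm over all Ω × K coordinates. Fix X ∈ E, a nonempty subset S ⊆ Ω, and ε ≥ 0. Suppose for every ω ∈ S there is a unique predicted class ĵ(ω) with stability margin M_ω^stab = f(X)(ω, ĵ(ω)) − max_{k ≠ ĵ(ω)} f(X)(ω, k) > 0, and set R_stab^ω(X) = 2^{(1−p)/p}·M_ω^stab / L. Let N be the maximum cardinality of a subset T ⊆ S with ∑_{ω ∈ T} R_stab^ω(X)^p ≤ ε^p. Then for every X̃ ∈ E with ‖X̃ − X‖ ≤ ε, the number of pixels ω ∈ S whose prediction at X̃ differs from ĵ(ω) (i.e. some k ≠ ĵ(ω) has f(X̃)(ω, k) ≥ f(X̃)(ω, ĵ(ω))) is at most N; consequently the fraction of pixels in S whose prediction is preserved under the attack is at least 1 − N/|S| (the Certified Robust Stability CRS_ε(X)). -/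
open scoped Classical

/-- Certified Robust Stability. Let `f : E → (Ω × K → ℝ)` be `L`-Lipschitz
(`L > 0`, ℓp output norm, `p ≥ 1`), `X` an input, `S ⊆ Ω` nonempty, `ε ≥ 0`. Suppose every
`ω ∈ S` has a unique predicted class `jhat ω` with stability margin `Mstab ω > 0`, and set
`Rstab ω = 2^((1-p)/p) * Mstab ω / L`. If `N` is the maximum cardinality of a `T ⊆ S` with
`∑_{ω ∈ T} (Rstab ω)^p ≤ ε^p`, then for every `X̃` with `‖X̃ - X‖ ≤ ε` at most `N` pixels of
`S` change prediction, and the fraction of preserved predictions on `S` is at least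
`1 - N/|S|`. -/
theorem stmt_11 {E Ω K : Type*} [NormedAddCommGroup E]
    [Fintype Ω] [Nonempty Ω] [Fintype K] [Nonempty K]
    (p : ℝ) (hp : 1 ≤ p) (L : ℝ) (hL : 0 < L)
    (f : E → Ω × K → ℝ)
    (hf : ∀ X₁ X₂ : E, (∑ ωk : Ω × K, |f X₁ ωk - f X₂ ωk| ^ p) ^ (1 / p) ≤ L * ‖X₁ - X₂‖)
    (X : E) (S : Finset Ω) (hSne : S.Nonempty) (ε : ℝ) (hε : 0 ≤ ε)
    (jhat : Ω → K) (Mstab : Ω → ℝ)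
    (hMdef : ∀ ω ∈ S,
      Mstab ω = f X (ω, jhat ω) - ⨆ k : {k : K // k ≠ jhat ω}, f X (ω, (k : K)))
    (hMpos : ∀ ω ∈ S, 0 < Mstab ω)
    (Rstab : Ω → ℝ) (hR : ∀ ω, Rstab ω = 2 ^ ((1 - p) / p) * Mstab ω / L)
    (N : ℕ)
    (hN : IsGreatest {m : ℕ | ∃ T ⊆ S, T.card = m ∧ ∑ ω ∈ T, Rstab ω ^ p ≤ ε ^ p} N) :
    ∀ X' : E, ‖X' - X‖ ≤ ε →
      (S.filter fun ω => ∃ k, k ≠ jhat ω ∧ f X' (ω, jhat ω) ≤ f X' (ω, k)).card ≤ N ∧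
      1 - (N : ℝ) / S.card ≤
        ((S.filter fun ω => ∀ k, k ≠ jhat ω → f X' (ω, k) < f X' (ω, jhat ω)).card : ℝ) /
          S.card := by
  intro X' hX'
  have hp0 : 0 < p := lt_of_lt_of_le one_pos hp
  set C := S.filter fun ω => ∃ k, k ≠ jhat ω ∧ f X' (ω, jhat ω) ≤ f X' (ω, k) with hC
  set d : Ω × K → ℝ := fun ωk => |f X ωk - f X' ωk| ^ p with hd
  have hdnn : ∀ ωk, 0 ≤ d ωk := fun ωk => Real.rpow_nonneg (abs_nonneg _) _
  -- total deviation bound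
  have htot : ∑ ωk : Ω × K, d ωk ≤ (L * ε) ^ p := by
    have h1 := hf X X'
    have hsum : 0 ≤ ∑ ωk : Ω × K, d ωk := Finset.sum_nonneg fun ωk _ => hdnn ωk
    have h2 : ((∑ ωk : Ω × K, d ωk) ^ (1 / p)) ^ p ≤ (L * ‖X - X'‖) ^ p :=
      Real.rpow_le_rpow (Real.rpow_nonneg hsum _) h1 hp0.le
    rw [← Real.rpow_mul hsum, one_div, inv_mul_cancel₀ hp0.ne', Real.rpow_one] at h2
    refine h2.trans (Real.rpow_le_rpow (by positivity) ?_ hp0.le)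
    rw [norm_sub_rev]
    exact mul_le_mul_of_nonneg_left hX' hL.le
  -- key: each changed pixel costs at least Rstab^p in total deviation
  have hkey : ∀ ω ∈ C, Rstab ω ^ p ≤ (∑ k : K, d (ω, k)) / L ^ p := by
    intro ω hω
    rw [hC, Finset.mem_filter] at hω
    obtain ⟨hωS, k, hk, hfk⟩ := hω
    have hsup : f X (ω, k) ≤ ⨆ k' : {k' : K // k' ≠ jhat ω}, f X (ω, (k' : K)) :=
      le_ciSup (f := fun k' : {k' : K // k' ≠ jhat ω} => f X (ω, (k' : K)))
        (Set.Finite.bddAbove (Set.finite_range _)) ⟨k, hk⟩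
    set a := |f X (ω, jhat ω) - f X' (ω, jhat ω)| with ha
    set b := |f X (ω, k) - f X' (ω, k)| with hb
    have hM : Mstab ω ≤ a + b := by
      have h0 : Mstab ω ≤ f X (ω, jhat ω) - f X (ω, k) := by
        rw [hMdef ω hωS]; linarith
      have h3 : f X (ω, jhat ω) - f X' (ω, jhat ω) ≤ a := le_abs_self _
      have h4 : f X' (ω, k) - f X (ω, k) ≤ b := by
        rw [hb, abs_sub_comm]; exact le_abs_self _
      linarith
    have hab : (a + b) ^ p ≤ 2 ^ (p - 1) * (a ^ p + b ^ p) := by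
      have h := NNReal.coe_le_coe.2
        (NNReal.rpow_add_le_mul_rpow_add_rpow (Real.toNNReal a) (Real.toNNReal b) hp)
      push_cast at h
      rwa [Real.coe_toNNReal a (abs_nonneg _), Real.coe_toNNReal b (abs_nonneg _)] at h
    have hMnn : 0 ≤ Mstab ω := (hMpos ω hωS).le
    have hMp : Mstab ω ^ p ≤ (a + b) ^ p := Real.rpow_le_rpow hMnn hM hp0.le
    have hcpow : ((2 : ℝ) ^ ((1 - p) / p)) ^ p = 2 ^ (1 - p) := by
      rw [← Real.rpow_mul (by norm_num : (0:ℝ) ≤ 2), div_mul_cancel₀ _ hp0.ne']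
    have hRp : Rstab ω ^ p = 2 ^ (1 - p) * Mstab ω ^ p / L ^ p := by
      rw [hR, Real.div_rpow (by positivity) hL.le,
        Real.mul_rpow (by positivity) hMnn, hcpow]
    have h2cancel : (2 : ℝ) ^ (1 - p) * 2 ^ (p - 1) = 1 := by
      rw [← Real.rpow_add (by norm_num)]; norm_num
    have h5 : 2 ^ (1 - p) * Mstab ω ^ p ≤ a ^ p + b ^ p := by
      have := mul_le_mul_of_nonneg_left (hMp.trans hab)
        (Real.rpow_nonneg (by norm_num : (0:ℝ) ≤ 2) (1 - p))
      rwa [← mul_assoc, h2cancel, one_mul] at this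
    have hnum : a ^ p + b ^ p ≤ ∑ k' : K, d (ω, k') := by
      have hsub : ({jhat ω, k} : Finset K) ⊆ Finset.univ := Finset.subset_univ _
      have hpair : ∑ k' ∈ ({jhat ω, k} : Finset K), d (ω, k') = a ^ p + b ^ p := by
        rw [Finset.sum_pair (Ne.symm hk)]
      rw [← hpair]
      exact Finset.sum_le_sum_of_subset_of_nonneg hsub fun k' _ _ => hdnn _
    rw [hRp]
    exact div_le_div_of_nonneg_right (h5.trans hnum) (by positivity) |>.trans_eq rfl
  -- sum over C
  have hCsum : ∑ ω ∈ C, Rstab ω ^ p ≤ ε ^ p := by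
    have h3 : ∑ ω ∈ C, ∑ k : K, d (ω, k) ≤ ∑ ωk : Ω × K, d ωk := by
      rw [Fintype.sum_prod_type]
      exact Finset.sum_le_sum_of_subset_of_nonneg (Finset.subset_univ C)
        (fun ω _ _ => Finset.sum_nonneg fun k _ => hdnn _)
    have h4 : (L * ε) ^ p / L ^ p = ε ^ p := by
      rw [Real.mul_rpow hL.le hε, mul_comm, mul_div_assoc, div_self (by positivity : (L:ℝ) ^ p ≠ 0), mul_one]
    calc ∑ ω ∈ C, Rstab ω ^ p
        ≤ ∑ ω ∈ C, (∑ k : K, d (ω, k)) / L ^ p := Finset.sum_le_sum hkey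
      _ = (∑ ω ∈ C, ∑ k : K, d (ω, k)) / L ^ p := by rw [Finset.sum_div]
      _ ≤ (∑ ωk : Ω × K, d ωk) / L ^ p := by gcongr
      _ ≤ (L * ε) ^ p / L ^ p := by gcongr
      _ = ε ^ p := h4
  have hCcard : C.card ≤ N := hN.2 ⟨C, Finset.filter_subset _ _, rfl, hCsum⟩
  refine ⟨hCcard, ?_⟩
  -- complementarity
  set P := S.filter fun ω => ∀ k, k ≠ jhat ω → f X' (ω, k) < f X' (ω, jhat ω) with hP
  have hcompl : C.card + P.card = S.card := by
    have h := Finset.card_filter_add_card_filter_not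
      (s := S) (p := fun ω => ∃ k, k ≠ jhat ω ∧ f X' (ω, jhat ω) ≤ f X' (ω, k))
    rw [← h]
    congr 2
    have : P = S.filter fun a => ¬∃ k, k ≠ jhat a ∧ f X' (a, jhat a) ≤ f X' (a, k) := by
      ext ω
      simp only [hP, Finset.mem_filter, and_congr_right_iff]
      intro _
      push_neg
      rfl
    rw [this]
  have hs : (0 : ℝ) < S.card := by exact_mod_cast Finset.card_pos.2 hSne
  have hPc : (P.card : ℝ) = S.card - C.card := by
    have : (C.card : ℝ) + P.card = S.card := by exact_mod_cast hcompl
    linarith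
  rw [hPc, sub_div, div_self hs.ne']
  have : (C.card : ℝ) / S.card ≤ (N : ℝ) / S.card := by
    gcongr

  linarith
end

section
/- Let E be a normed space, Ω a finite nonempty type, p ≥ 1 a real number, and let f : E → (Ω × Fin 2 → ℝ) be L-Lipschitz (L > 0) for a binary segmentation task, where the output space carries the ℓp norm over all coordinates. Fix X ∈ E, labels Y : Ω → Fin 2, let S₁ = {ω ∈ Ω : Y(ω) = 1} be nonempty, and let ε ≥ 0. For ω ∈ S₁ set R^ω(X,Y) = 2^{(1−p)/p}·max(M_ω, 0) / L with M_ω = f(X)(ω, 1) − f(X)(ω, 0). Let N_FNR be the maximum cardinality of a subset T ⊆ S₁ with ∑_{ω ∈ T} R^ω(X,Y)^p ≤ ε^p. Then for every X̃ ∈ E with ‖X̃ − X‖ ≤ ε, the false negative rate of the prediction at X̃, defined as (1/|S₁|)·#{ω ∈ S₁ : f(X̃)(ω, 0) ≥ f(X̃)(ω, 1)}, is at most N_FNR/|S₁|. -/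
open scoped Classical

lemma aux_pow_add {a b pp : ℝ} (ha : 0 ≤ a) (hb : 0 ≤ b) (hp : 1 ≤ pp) :
    (a + b) ^ pp ≤ 2 ^ (pp - 1) * (a ^ pp + b ^ pp) := by
  lift a to NNReal using ha
  lift b to NNReal using hb
  have := NNReal.rpow_add_le_mul_rpow_add_rpow a b hp
  exact_mod_cast this

/-- Certified worst-case False Negative Rate for binary segmentation. Let
`f : E → (Ω × Fin 2 → ℝ)` be `L`-Lipschitz (`L > 0`, ℓp output norm, `p ≥ 1`), `Y : Ω → Fin 2`
labels, `S₁ = {ω : Y ω = 1}` nonempty, `ε ≥ 0`, and for `ω` set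
`R ω = 2^((1-p)/p) * max (f X (ω,1) - f X (ω,0)) 0 / L`. If `N_FNR` is the maximum
cardinality of a `T ⊆ S₁` with `∑_{ω ∈ T} (R ω)^p ≤ ε^p`, then for every `X̃` with
`‖X̃ - X‖ ≤ ε` the false negative rate at `X̃` is at most `N_FNR / |S₁|`. -/
theorem stmt_12 {E Ω : Type*} [NormedAddCommGroup E] [Fintype Ω] [Nonempty Ω]
    (p : ℝ) (hp : 1 ≤ p) (L : ℝ) (hL : 0 < L)
    (f : E → Ω × Fin 2 → ℝ)
    (hf : ∀ X₁ X₂ : E,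
      (∑ ωk : Ω × Fin 2, |f X₁ ωk - f X₂ ωk| ^ p) ^ (1 / p) ≤ L * ‖X₁ - X₂‖)
    (X : E) (Y : Ω → Fin 2)
    (S₁ : Finset Ω) (hS₁ : S₁ = Finset.univ.filter fun ω => Y ω = 1) (hS₁ne : S₁.Nonempty)
    (ε : ℝ) (hε : 0 ≤ ε)
    (R : Ω → ℝ) (hR : ∀ ω, R ω = 2 ^ ((1 - p) / p) * max (f X (ω, 1) - f X (ω, 0)) 0 / L)
    (NFNR : ℕ)
    (hN : IsGreatest {m : ℕ | ∃ T ⊆ S₁, T.card = m ∧ ∑ ω ∈ T, R ω ^ p ≤ ε ^ p} NFNR) :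
    ∀ X' : E, ‖X' - X‖ ≤ ε →
      ((S₁.filter fun ω => f X' (ω, 1) ≤ f X' (ω, 0)).card : ℝ) / S₁.card ≤
        (NFNR : ℝ) / S₁.card := by
  intro X' hX'
  have hp0 : (0 : ℝ) < p := lt_of_lt_of_le one_pos hp
  set T := S₁.filter fun ω => f X' (ω, 1) ≤ f X' (ω, 0) with hT
  -- pointwise bound on R ω ^ p for ω ∈ T
  have key : ∀ ω ∈ T, R ω ^ p ≤
      (|f X (ω, 0) - f X' (ω, 0)| ^ p + |f X (ω, 1) - f X' (ω, 1)| ^ p) / L ^ p := by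
    intro ω hω
    have hflip : f X' (ω, 1) ≤ f X' (ω, 0) := (Finset.mem_filter.mp hω).2
    set d0 := |f X (ω, 0) - f X' (ω, 0)|
    set d1 := |f X (ω, 1) - f X' (ω, 1)|
    have hd0 : 0 ≤ d0 := abs_nonneg _
    have hd1 : 0 ≤ d1 := abs_nonneg _
    set M := max (f X (ω, 1) - f X (ω, 0)) 0 with hM
    have hM0 : 0 ≤ M := le_max_right _ _
    have hMle : M ≤ d1 + d0 := by
      apply max_le _ (by linarith)
      have h1 : f X (ω, 1) - f X' (ω, 1) ≤ d1 := le_abs_self _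
      have h0 := neg_abs_le (f X (ω, 0) - f X' (ω, 0))
      simp only [d0, d1] at *
      linarith
    have hMp : M ^ p ≤ 2 ^ (p - 1) * (d1 ^ p + d0 ^ p) := by
      calc M ^ p ≤ (d1 + d0) ^ p := Real.rpow_le_rpow hM0 hMle hp0.le
        _ ≤ 2 ^ (p - 1) * (d1 ^ p + d0 ^ p) := aux_pow_add hd1 hd0 hp
    have hRω : R ω ^ p = 2 ^ (1 - p) * M ^ p / L ^ p := by
      rw [hR ω, ← hM]
      rw [Real.div_rpow (by positivity) hL.le,
        Real.mul_rpow (by positivity) hM0,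
        ← Real.rpow_mul (by norm_num : (0:ℝ) ≤ 2), div_mul_cancel₀ _ hp0.ne']
    rw [hRω]
    have h2 : (2:ℝ) ^ (1 - p) * (2 ^ (p - 1) * (d1 ^ p + d0 ^ p))
        = d0 ^ p + d1 ^ p := by
      rw [← mul_assoc, ← Real.rpow_add (by norm_num : (0:ℝ) < 2)]
      norm_num [add_comm]
    have hLp : (0:ℝ) < L ^ p := Real.rpow_pos_of_pos hL p
    apply div_le_div_of_nonneg_right ?_ hLp.le |>.trans_eq rfl
    calc 2 ^ (1 - p) * M ^ p ≤ 2 ^ (1 - p) * (2 ^ (p - 1) * (d1 ^ p + d0 ^ p)) := by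
          apply mul_le_mul_of_nonneg_left hMp (by positivity)
      _ = d0 ^ p + d1 ^ p := h2
  -- sum over T
  have hsum : ∑ ω ∈ T, R ω ^ p ≤ ε ^ p := by
    have h1 : ∑ ω ∈ T, R ω ^ p ≤
        (∑ ωk : Ω × Fin 2, |f X ωk - f X' ωk| ^ p) / L ^ p := by
      calc ∑ ω ∈ T, R ω ^ p
          ≤ ∑ ω ∈ T, (|f X (ω, 0) - f X' (ω, 0)| ^ p + |f X (ω, 1) - f X' (ω, 1)| ^ p) / L ^ p :=
            Finset.sum_le_sum key
        _ = (∑ ω ∈ T, (|f X (ω, 0) - f X' (ω, 0)| ^ p + |f X (ω, 1) - f X' (ω, 1)| ^ p)) / L ^ p :=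
            by rw [Finset.sum_div]
        _ ≤ (∑ ωk : Ω × Fin 2, |f X ωk - f X' ωk| ^ p) / L ^ p := by
            apply div_le_div_of_nonneg_right ?_ (Real.rpow_pos_of_pos hL p).le
            have : ∑ ω ∈ T, (|f X (ω, 0) - f X' (ω, 0)| ^ p + |f X (ω, 1) - f X' (ω, 1)| ^ p)
                = ∑ ωk ∈ T ×ˢ (Finset.univ : Finset (Fin 2)), |f X ωk - f X' ωk| ^ p := by
              rw [Finset.sum_product]
              congr 1
              ext ω
              simp [Fin.sum_univ_two]
            rw [this]
            apply Finset.sum_le_sum_of_subset_of_nonneg (Finset.subset_univ _)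
            intro i _ _
            positivity
    have hS : (0:ℝ) ≤ ∑ ωk : Ω × Fin 2, |f X ωk - f X' ωk| ^ p :=
      Finset.sum_nonneg fun i _ => by positivity
    have h2 : ∑ ωk : Ω × Fin 2, |f X ωk - f X' ωk| ^ p ≤ L ^ p * ε ^ p := by
      have hlip := hf X X'
      have hnorm : ‖X - X'‖ ≤ ε := by rwa [norm_sub_rev]
      have h3 : ((∑ ωk : Ω × Fin 2, |f X ωk - f X' ωk| ^ p) ^ (1 / p)) ^ p ≤ (L * ε) ^ p := by
        apply Real.rpow_le_rpow (Real.rpow_nonneg hS _) _ hp0.le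
        exact hlip.trans (mul_le_mul_of_nonneg_left hnorm hL.le)
      rwa [← Real.rpow_mul hS, one_div_mul_cancel hp0.ne', Real.rpow_one,
        Real.mul_rpow hL.le hε] at h3
    calc ∑ ω ∈ T, R ω ^ p ≤ (∑ ωk : Ω × Fin 2, |f X ωk - f X' ωk| ^ p) / L ^ p := h1
      _ ≤ L ^ p * ε ^ p / L ^ p := by
          apply div_le_div_of_nonneg_right h2 (Real.rpow_pos_of_pos hL p).le
      _ = ε ^ p := by
          rw [mul_comm, mul_div_assoc, div_self (Real.rpow_pos_of_pos hL p).ne', mul_one]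
  have hcard : T.card ≤ NFNR := hN.2 ⟨T, Finset.filter_subset _ _, rfl, hsum⟩
  have hS₁pos : (0:ℝ) < S₁.card := by exact_mod_cast Finset.card_pos.mpr hS₁ne
  apply div_le_div_of_nonneg_right ?_ hS₁pos.le |>.trans_eq rfl
  exact_mod_cast hcard
end
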